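/- arXiv:math/0107049 — 6 statements merged into one kernel-verified Lean document; each statement's English description precedes it below -/
import Mathlib

section
/- Let G be any group. If there exist nonzero a, b ∈ ℂG with ab = 0, then there exist nonzero A, B ∈ ℚ̄G with AB = 0. (In other words, if ℚ̄G has no non-trivial zero divisors then neither does ℂG.) -/
/-!
All coefficients of `a` and `b` lie in a finitely generated `ℚ`-subalgebra `S` of `ℂ`, and
`a * b = 0` already holds in `S[G]`. Since `S` is a Jacobson ring, a nonzero element of `S`
(the product of a nonzero coefficient of `a` and one of `b`) avoids some maximal ideal `m`,
and by Zariski's lemma `S ⧸ m` is a number field, which embeds into `ℂ`. Applying this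
specialization `S → ℚ̄` coefficientwise keeps the product zero and both factors nonzero.
-/

open MonoidAlgebra

theorem exists_algHom_isAlgebraic_ne_zero {K R L : Type*} [Field K] [CommRing R]
    [Algebra K R] [Algebra.FiniteType K R] [Field L] [IsAlgClosed L] [Algebra K L] {c : R}
    (hc : ¬IsNilpotent c) : ∃ ψ : R →ₐ[K] L, (∀ r, IsAlgebraic K (ψ r)) ∧ ψ c ≠ 0 := by
  have : IsJacobsonRing R := isJacobsonRing_of_finiteType (A := K)
  obtain ⟨m, hm, hcm⟩ : ∃ m : Ideal R, m.IsMaximal ∧ c ∉ m := by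
    have : c ∉ (⊥ : Ideal R).jacobson := by
      rw [← Ideal.radical_eq_jacobson]
      exact mt mem_nilradical.mp hc
    simpa [Ideal.jacobson, Ideal.mem_sInf] using this
  let := Ideal.Quotient.field m
  have := finite_of_finite_type_of_isJacobsonRing K (R ⧸ m)
  let ι : R ⧸ m →ₐ[K] L := IsAlgClosed.lift
  refine ⟨ι.comp (Ideal.Quotient.mkₐ K m),
    fun r => (Algebra.IsAlgebraic.isAlgebraic (Ideal.Quotient.mk m r)).algHom ι, ?_⟩
  simpa [Ideal.Quotient.eq_zero_iff_mem] using hcm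

namespace MonoidAlgebra

theorem exists_coeff_ne_zero {R M : Type*} [Semiring R] {x : R[M]} (hx : x ≠ 0) :
    ∃ m, x.coeff m ≠ 0 := by
  by_contra! h
  exact hx (MonoidAlgebra.ext (Finsupp.ext h))

theorem exists_algHom_isAlgebraic_map_ne_zero {K R L M : Type*} [Field K] [CommRing R]
    [IsDomain R] [Algebra K R] [Algebra.FiniteType K R] [Field L] [IsAlgClosed L] [Algebra K L]
    [Monoid M] {x y : R[M]} (hx : x ≠ 0) (hy : y ≠ 0) :
    ∃ ψ : R →ₐ[K] L, (∀ r, IsAlgebraic K (ψ r)) ∧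
      mapRingHom M ψ.toRingHom x ≠ 0 ∧ mapRingHom M ψ.toRingHom y ≠ 0 := by
  obtain ⟨m, hm⟩ := exists_coeff_ne_zero hx
  obtain ⟨n, hn⟩ := exists_coeff_ne_zero hy
  obtain ⟨ψ, hψ, hψc⟩ := exists_algHom_isAlgebraic_ne_zero (K := K) (L := L)
    (c := x.coeff m * y.coeff n) fun h => mul_ne_zero hm hn h.eq_zero
  rw [map_mul] at hψc
  refine ⟨ψ, hψ, fun h => left_ne_zero_of_mul hψc ?_, fun h => right_ne_zero_of_mul hψc ?_⟩
  · simpa using congr_arg (coeff · m) h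
  · simpa using congr_arg (coeff · n) h

theorem exists_mapRingHom_val_eq {K k M : Type*} [CommSemiring K] [Semiring k] [Algebra K k]
    [Monoid M] (S : Subalgebra K k) {x : k[M]} (hx : ∀ m, x.coeff m ∈ S) :
    ∃ y : S[M], mapRingHom M S.val.toRingHom y = x := by
  have : x ∈ Set.range (map (M := M) S.val.toRingHom.toAddMonoidHom) := by
    rw [range_map]
    exact fun m => ⟨⟨_, hx m⟩, rfl⟩
  exact this

theorem exists_fg_subalgebra_coeff_mem {K k M : Type*} [CommSemiring K] [Semiring k]
    [Algebra K k] (s : Finset k[M]) :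
    ∃ S : Subalgebra K k, S.FG ∧ ∀ x ∈ s, ∀ m, x.coeff m ∈ S := by
  classical
  refine ⟨Algebra.adjoin K ↑(s.biUnion fun x => x.coeff.frange), Subalgebra.fg_adjoin_finset _,
    fun x hx m => ?_⟩
  by_cases h : x.coeff m = 0
  · simp [h]
  · exact Algebra.subset_adjoin
      (Finset.mem_biUnion.mpr ⟨x, hx, Finsupp.mem_frange.mpr ⟨h, m, rfl⟩⟩)

end MonoidAlgebra

/-- If the complex group algebra `ℂG` has non-trivial zero divisors, then
already the group algebra `ℚ̄G` over the algebraic numbers (modelled as elements of `ℂG`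
all of whose coefficients are algebraic over `ℚ`) has non-trivial zero divisors. -/
theorem zero_divisors_descend_to_algebraic_numbers
    (G : Type*) [Group G]
    (a b : MonoidAlgebra ℂ G) (ha : a ≠ 0) (hb : b ≠ 0) (hab : a * b = 0) :
    ∃ A B : MonoidAlgebra ℂ G,
      (∀ g : G, IsAlgebraic ℚ (A.coeff g)) ∧ (∀ g : G, IsAlgebraic ℚ (B.coeff g)) ∧
      A ≠ 0 ∧ B ≠ 0 ∧ A * B = 0 := by
  classical
  obtain ⟨S, hS, hcoeff⟩ := exists_fg_subalgebra_coeff_mem (K := ℚ) {a, b}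
  have : Algebra.FiniteType ℚ S := (Subalgebra.fg_iff_finiteType S).mp hS
  obtain ⟨a, rfl⟩ := exists_mapRingHom_val_eq S (hcoeff a (by simp))
  obtain ⟨b, rfl⟩ := exists_mapRingHom_val_eq S (hcoeff b (by simp))
  have hab : a * b = 0 := by
    apply map_injective (M := G) S.val.toRingHom.toAddMonoidHom Subtype.val_injective
    change mapRingHom G S.val.toRingHom (a * b) = mapRingHom G S.val.toRingHom 0
    rwa [map_mul, map_zero]
  have ha : a ≠ 0 := by rintro rfl; simp at ha
  have hb : b ≠ 0 := by rintro rfl; simp at hb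
  obtain ⟨ψ, hψ, hA, hB⟩ := exists_algHom_isAlgebraic_map_ne_zero (K := ℚ) (L := ℂ) ha hb
  refine ⟨_, _, fun g => ?_, fun g => ?_, hA, hB, by rw [← map_mul, hab, map_zero]⟩ <;>
    simpa using hψ _
end

section
/- Let G be an amenable group, R a division ring, and suppose the group ring R[G] has no non-trivial zero divisors. Then R[G] satisfies the two-sided Ore condition: for all α, σ ∈ R[G] with σ ≠ 0, there exist β, τ ∈ R[G] with τ ≠ 0 and βσ = τα, and there exist β', τ' ∈ R[G] with τ' ≠ 0 and σβ' = ατ'. -/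
open scoped Pointwise

/-- `G` is amenable in the sense of the Følner condition: every finite subset `Z ⊆ G` and
`ε > 0` admit a nonempty finite subset `X ⊆ G` with `|ZX \ X| < ε |X|`. -/
def FolnerAmenable (G : Type*) [Group G] [DecidableEq G] : Prop :=
  ∀ (Z : Finset G) (ε : ℝ), 0 < ε →
    ∃ X : Finset G, X.Nonempty ∧ ((Z * X) \ X).card < ε * X.card

/-!
Let `S` contain the supports of `α` and `σ`. A Følner set `X` for `S` satisfies `|SX| < 2|X|`,
so the linear map `(β, τ) ↦ σβ - ατ`, from pairs supported on `X` to elements supported on `SX`,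
has a nonzero kernel element by counting dimensions; as `R[G]` has no zero divisors and `σ ≠ 0`,
its `τ` is nonzero. Left multiplication by `σ` is only linear for the right `R`-module structure,
so this dimension count takes place over `Rᵐᵒᵖ`. The left Ore condition is the mirror image,
with a Følner set `X` for `S⁻¹` and pairs supported on `X⁻¹`.
-/

open Module Finset

theorem LinearMap.exists_ne_zero_and_eq_of_finrank_lt {K V W : Type*} [DivisionRing K]
    [AddCommGroup V] [Module K V] [AddCommGroup W] [Module K W]
    [FiniteDimensional K V] [FiniteDimensional K W] (f g : V →ₗ[K] W)
    (h : finrank K W < 2 * finrank K V) :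
    ∃ p : V × V, p ≠ 0 ∧ f p.1 = g p.2 := by
  have : ker (f ∘ₗ fst K V V - g ∘ₗ snd K V V) ≠ ⊥ :=
    ker_ne_bot_of_finrank_lt (by rwa [finrank_prod, ← two_mul])
  obtain ⟨p, hp, hne⟩ := (Submodule.ne_bot_iff _).1 this
  exact ⟨p, hne, sub_eq_zero.1 hp⟩

namespace MonoidAlgebra

theorem mul_mem_supported {k G : Type*} [Semiring k] [Mul G] {x y : MonoidAlgebra k G}
    {s t : Set G} (hx : x ∈ supported k k s) (hy : y ∈ supported k k t) :
    x * y ∈ supported k k (s * t) := by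
  classical
  rw [mem_supported] at *
  refine (coe_subset.2 (support_coeff_mul_subset x y)).trans ?_
  rw [coe_mul]
  exact Set.mul_subset_mul hx hy

variable {R G : Type*} [DivisionRing R]

instance (s : Finset G) : Module.Finite R (supported R R (s : Set G)) :=
  .equiv (supportedEquivFinsupp _).symm

theorem finrank_supported (s : Finset G) : finrank R (supported R R (s : Set G)) = #s := by
  simp [(supportedEquivFinsupp _).finrank_eq]

noncomputable def supportedOpEquivFinsupp (s : Set G) : supported Rᵐᵒᵖ R s ≃ₗ[Rᵐᵒᵖ] (s →₀ Rᵐᵒᵖ) :=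
  supportedEquivFinsupp s ≪≫ₗ Finsupp.mapRange.linearEquiv (MulOpposite.opLinearEquiv Rᵐᵒᵖ)

instance (s : Finset G) : Module.Finite Rᵐᵒᵖ (supported Rᵐᵒᵖ R (s : Set G)) :=
  .equiv (supportedOpEquivFinsupp _).symm

theorem finrank_op_supported (s : Finset G) :
    finrank Rᵐᵒᵖ (supported Rᵐᵒᵖ R (s : Set G)) = #s := by
  simp [(supportedOpEquivFinsupp (R := R) (s : Set G)).finrank_eq]

variable [Mul G] [DecidableEq G] {Y S : Finset G} {σ α : MonoidAlgebra R G}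

theorem exists_common_left_multiple_of_card_mul_lt (h : #(Y * S) < 2 * #Y)
    (hσ : σ ∈ supported R R (S : Set G)) (hα : α ∈ supported R R (S : Set G)) :
    ∃ β τ : MonoidAlgebra R G, (β, τ) ≠ 0 ∧ β * σ = τ * α := by
  have hmem {γ : MonoidAlgebra R G} (hγ : γ ∈ supported R R (S : Set G)) :
      ∀ β ∈ supported R R (Y : Set G), β * γ ∈ supported R R ((Y * S : Finset G) : Set G) :=
    fun β hβ ↦ coe_mul Y S ▸ mul_mem_supported hβ hγ
  obtain ⟨⟨β, τ⟩, hne, heq⟩ :=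
    ((LinearMap.mulRight R σ).restrict (hmem hσ)).exists_ne_zero_and_eq_of_finrank_lt
      ((LinearMap.mulRight R α).restrict (hmem hα)) (by rwa [finrank_supported, finrank_supported])
  refine ⟨β, τ, ?_, congrArg Subtype.val heq⟩
  simpa [Prod.ext_iff] using hne

theorem exists_common_right_multiple_of_card_mul_lt (h : #(S * Y) < 2 * #Y)
    (hσ : σ ∈ supported R R (S : Set G)) (hα : α ∈ supported R R (S : Set G)) :
    ∃ β τ : MonoidAlgebra R G, (β, τ) ≠ 0 ∧ σ * β = α * τ := by
  have hmem {γ : MonoidAlgebra R G} (hγ : γ ∈ supported R R (S : Set G)) :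
      ∀ β ∈ supported Rᵐᵒᵖ R (Y : Set G), γ * β ∈ supported Rᵐᵒᵖ R ((S * Y : Finset G) : Set G) :=
    fun β hβ ↦ coe_mul S Y ▸ mul_mem_supported hγ hβ
  obtain ⟨⟨β, τ⟩, hne, heq⟩ :=
    ((LinearMap.mulLeft Rᵐᵒᵖ σ).restrict (hmem hσ)).exists_ne_zero_and_eq_of_finrank_lt
      ((LinearMap.mulLeft Rᵐᵒᵖ α).restrict (hmem hα))
      (by rwa [finrank_op_supported, finrank_op_supported])
  refine ⟨β, τ, ?_, congrArg Subtype.val heq⟩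
  simpa [Prod.ext_iff] using hne

end MonoidAlgebra

namespace FolnerAmenable

variable {G : Type*} [Group G] [DecidableEq G]

theorem exists_card_mul_lt (hG : FolnerAmenable G) (Z : Finset G) :
    ∃ X : Finset G, #(Z * X) < 2 * #X := by
  obtain ⟨X, -, hX⟩ := hG Z 1 one_pos
  have hsdiff : #((Z * X) \ X) < #X := by exact_mod_cast (one_mul (#X : ℝ)) ▸ hX
  have := card_le_card_sdiff_add_card (s := Z * X) (t := X)
  exact ⟨X, by omega⟩

theorem exists_card_mul_lt' (hG : FolnerAmenable G) (Z : Finset G) :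
    ∃ Y : Finset G, #(Y * Z) < 2 * #Y := by
  obtain ⟨X, hX⟩ := hG.exists_card_mul_lt Z⁻¹
  refine ⟨X⁻¹, ?_⟩
  rwa [← card_inv (X⁻¹ * Z), mul_inv_rev, inv_inv, card_inv]

variable {R : Type*} [DivisionRing R] [NoZeroDivisors (MonoidAlgebra R G)]

theorem exists_common_left_multiple (hG : FolnerAmenable G) (α : MonoidAlgebra R G)
    {σ : MonoidAlgebra R G} (hσ : σ ≠ 0) :
    ∃ β τ : MonoidAlgebra R G, τ ≠ 0 ∧ β * σ = τ * α := by
  obtain ⟨Y, hY⟩ := hG.exists_card_mul_lt' (σ.coeff.support ∪ α.coeff.support)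
  obtain ⟨β, τ, hne, heq⟩ := MonoidAlgebra.exists_common_left_multiple_of_card_mul_lt hY
    (MonoidAlgebra.mem_supported.2 (coe_subset.2 subset_union_left))
    (MonoidAlgebra.mem_supported.2 (coe_subset.2 subset_union_right))
  refine ⟨β, τ, ?_, heq⟩
  rintro rfl
  rw [zero_mul, mul_eq_zero, or_iff_left hσ] at heq
  exact hne (by rw [heq, Prod.mk_zero_zero])

theorem exists_common_right_multiple (hG : FolnerAmenable G) (α : MonoidAlgebra R G)
    {σ : MonoidAlgebra R G} (hσ : σ ≠ 0) :
    ∃ β τ : MonoidAlgebra R G, τ ≠ 0 ∧ σ * β = α * τ := by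
  obtain ⟨X, hX⟩ := hG.exists_card_mul_lt (σ.coeff.support ∪ α.coeff.support)
  obtain ⟨β, τ, hne, heq⟩ := MonoidAlgebra.exists_common_right_multiple_of_card_mul_lt hX
    (MonoidAlgebra.mem_supported.2 (coe_subset.2 subset_union_left))
    (MonoidAlgebra.mem_supported.2 (coe_subset.2 subset_union_right))
  refine ⟨β, τ, ?_, heq⟩
  rintro rfl
  rw [mul_zero, mul_eq_zero, or_iff_right hσ] at heq
  exact hne (by rw [heq, Prod.mk_zero_zero])

end FolnerAmenable

/-- **Tamari.** If `G` is amenable and the group ring `R[G]` over a division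
ring `R` has no non-trivial zero divisors, then `R[G]` satisfies the two-sided Ore
condition. -/
theorem ore_condition_of_amenable
    (G : Type*) [Group G] [DecidableEq G] (R : Type*) [DivisionRing R]
    (hG : FolnerAmenable G)
    (hnzd : ∀ a b : MonoidAlgebra R G, a * b = 0 → a = 0 ∨ b = 0) :
    ∀ α σ : MonoidAlgebra R G, σ ≠ 0 →
      (∃ β τ : MonoidAlgebra R G, τ ≠ 0 ∧ β * σ = τ * α) ∧
      (∃ β' τ' : MonoidAlgebra R G, τ' ≠ 0 ∧ σ * β' = α * τ') := by
  have : NoZeroDivisors (MonoidAlgebra R G) := ⟨hnzd _ _⟩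
  exact fun α σ hσ ↦ ⟨hG.exists_common_left_multiple α hσ, hG.exists_common_right_multiple α hσ⟩
end

section
/- Let X be a left G-set and H a group such that for every x ∈ X the stabilizer G_x := {g ∈ G : gx = x} embeds in H (admits an injective group homomorphism into H). Then: (1) there exists a family of maps (γ_x : G → H)_{x∈X} such that γ_{g₁x}(g₂)·γ_x(g₁) = γ_x(g₂g₁) for all x ∈ X and g₁, g₂ ∈ G, and the restriction of γ_x to G_x is an injective group homomorphism; (2) given any family as in (1), the set X × H carries a (G,H)-bi-set structure defined by g·(x,y)·h = (gx, γ_x(g)·y·h), which is free as a left G-set and free as a right H-set; moreover, for each x ∈ X, if Y is a left transversal of the subgroup γ_x(G_x) in H, then {x} × Y is a left G-transversal in Gx × H (i.e. it contains exactly one element of each G-orbit of Gx × H ⊆ X × H). -/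
/-- A family of maps `γ_x : G → H` as in part (1) of the lemma of Warren Dicks: it
satisfies the cocycle identity `γ_{g₁x}(g₂) γ_x(g₁) = γ_x(g₂g₁)`, and restricts on each
stabilizer `G_x` to an injective group homomorphism. -/
def CocycleFamily {G X H : Type*} [Group G] [Group H] [MulAction G X]
    (γ : X → G → H) : Prop :=
  (∀ (x : X) (g₁ g₂ : G), γ (g₁ • x) g₂ * γ x g₁ = γ x (g₂ * g₁)) ∧
  (∀ x : X, Set.InjOn (γ x) (MulAction.stabilizer G x : Set G)) ∧
  (∀ x : X, γ x 1 = 1) ∧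
  (∀ x : X, ∀ a ∈ MulAction.stabilizer G x, ∀ b ∈ MulAction.stabilizer G x,
    γ x (a * b) = γ x a * γ x b)

/-- **Dicks.** Let `X` be a left `G`-set such that each stabilizer `G_x`
embeds in the group `H`.  Then (1) there is a family of maps `γ_x : G → H` satisfying the
cocycle identity and injective (a homomorphism) on each stabilizer, and (2) for any such
family, `X × H` becomes a `G`-free and `H`-free `(G,H)`-bi-set via
`g(x,y)h = (gx, γ_x(g) y h)`; moreover if `Y` is a left transversal of `γ_x(G_x)` in `H`,
then `{x} × Y` is a left `G`-transversal in `Gx × H`. -/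
theorem dicks_biset_lemma
    (G X H : Type*) [Group G] [Group H] [MulAction G X]
    (hstab : ∀ x : X, ∃ φ : MulAction.stabilizer G x →* H, Function.Injective φ) :
    (∃ γ : X → G → H, CocycleFamily γ) ∧
    (∀ γ : X → G → H, CocycleFamily γ →
      ∀ act : G → X × H → X × H,
        (∀ (g : G) (p : X × H), act g p = (g • p.1, γ p.1 g * p.2)) →
        -- `act` together with right multiplication is a `(G,H)`-bi-set structure:
        (∀ p : X × H, act 1 p = p) ∧
        (∀ (g₂ g₁ : G) (p : X × H), act (g₂ * g₁) p = act g₂ (act g₁ p)) ∧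
        (∀ (g : G) (h : H) (p : X × H),
          act g (p.1, p.2 * h) = ((act g p).1, (act g p).2 * h)) ∧
        -- it is free as a left `G`-set and free as a right `H`-set:
        (∀ (g : G) (p : X × H), act g p = p → g = 1) ∧
        (∀ (h : H) (p : X × H), (p.1, p.2 * h) = p → h = 1) ∧
        -- transversal statement:
        (∀ (x : X) (Y : Set H),
          (∀ h : H, ∃! y : H, y ∈ Y ∧
            ∃ k ∈ γ x '' (MulAction.stabilizer G x : Set G), h = k * y) →
          ∀ p : X × H, p.1 ∈ MulAction.orbit G x →
            ∃! q : X × H, q ∈ (({x} : Set X) ×ˢ Y) ∧ ∃ g : G, act g q = p)) := by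
  classical
  constructor
  · -- Part 1: construct the cocycle family
    choose φ hφ using hstab
    set R := MulAction.orbitRel G X with hR
    -- choose, for each x, an element carrying the orbit representative to x
    have hout : ∀ x : X, ∃ g : G, g • (Quotient.mk R x).out = x := by
      intro x
      have h0 : Quotient.mk R ((Quotient.mk R x).out) = Quotient.mk R x :=
        Quotient.out_eq _
      have h1 : (Quotient.mk R x).out ∈ MulAction.orbit G x := by
        exact Quotient.exact h0
      obtain ⟨g, hg⟩ := MulAction.mem_orbit_iff.mp h1
      exact ⟨g⁻¹, by rw [← hg, inv_smul_smul]⟩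
    choose t ht using hout
    have hclass : ∀ (g : G) (x : X), Quotient.mk R (g • x) = Quotient.mk R x := by
      intro g x
      exact Quotient.sound ((MulAction.orbitRel_apply).mpr (MulAction.mem_orbit_iff.mpr ⟨g, rfl⟩))
    have hstabmem : ∀ (x : X) (g : G),
        ((t (g • x))⁻¹ * g * t x) ∈ MulAction.stabilizer G (Quotient.mk R x).out := by
      intro x g
      have h1 := ht x
      have h2 := ht (g • x)
      rw [hclass g x] at h2
      rw [MulAction.mem_stabilizer_iff, mul_smul, mul_smul, h1, inv_smul_eq_iff]
      exact h2.symm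
    set F : Quotient R → G → H := fun q a =>
      if ha : a ∈ MulAction.stabilizer G q.out then φ q.out ⟨a, ha⟩ else 1 with hF
    have hF1 : ∀ q, F q 1 = 1 := by
      intro q
      simp only [hF, dif_pos (one_mem _)]
      exact map_one _
    have hFmul : ∀ q a b, a ∈ MulAction.stabilizer G q.out →
        b ∈ MulAction.stabilizer G q.out → F q (a * b) = F q a * F q b := by
      intro q a b ha hb
      simp only [hF, dif_pos ha, dif_pos hb, dif_pos (mul_mem ha hb)]
      rw [← map_mul]
      rfl
    have hFinj : ∀ q a b, a ∈ MulAction.stabilizer G q.out →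
        b ∈ MulAction.stabilizer G q.out → F q a = F q b → a = b := by
      intro q a b ha hb h
      simp only [hF, dif_pos ha, dif_pos hb] at h
      have := hφ q.out h
      exact congrArg Subtype.val this
    refine ⟨fun x g => F (Quotient.mk R x) ((t (g • x))⁻¹ * g * t x), ?_, ?_, ?_, ?_⟩
    · -- cocycle identity
      intro x g₁ g₂
      show F (Quotient.mk R (g₁ • x)) ((t (g₂ • g₁ • x))⁻¹ * g₂ * t (g₁ • x)) *
          F (Quotient.mk R x) ((t (g₁ • x))⁻¹ * g₁ * t x) =
          F (Quotient.mk R x) ((t ((g₂ * g₁) • x))⁻¹ * (g₂ * g₁) * t x)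
      rw [hclass g₁ x]
      have hA := hstabmem (g₁ • x) g₂
      rw [hclass g₁ x] at hA
      have hB := hstabmem x g₁
      rw [← hFmul _ _ _ hA hB]
      congr 1
      rw [mul_smul]
      group
    · -- injectivity on the stabilizer
      intro x a ha b hb hab
      have ha' : a • x = x := ha
      have hb' : b • x = x := hb
      have h : F (Quotient.mk R x) ((t (a • x))⁻¹ * a * t x) =
          F (Quotient.mk R x) ((t (b • x))⁻¹ * b * t x) := hab
      rw [ha', hb'] at h
      have hma := hstabmem x a
      have hmb := hstabmem x b
      rw [ha'] at hma
      rw [hb'] at hmb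
      have := hFinj _ _ _ hma hmb h
      have h2 : a * t x = b * t x := by
        have := congrArg (fun u => t x * u) this
        simpa [mul_assoc] using this
      exact mul_right_cancel h2
    · -- maps 1 to 1
      intro x
      show F (Quotient.mk R x) ((t ((1 : G) • x))⁻¹ * 1 * t x) = 1
      rw [one_smul, mul_one, inv_mul_cancel]
      exact hF1 _
    · -- homomorphism on the stabilizer
      intro x a ha b hb
      have ha' : a • x = x := ha
      have hb' : b • x = x := hb
      have hab' : (a * b) • x = x := by rw [mul_smul, hb', ha']
      show F (Quotient.mk R x) ((t ((a * b) • x))⁻¹ * (a * b) * t x) =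
          F (Quotient.mk R x) ((t (a • x))⁻¹ * a * t x) *
          F (Quotient.mk R x) ((t (b • x))⁻¹ * b * t x)
      rw [ha', hb', hab']
      have hma := hstabmem x a
      have hmb := hstabmem x b
      rw [ha'] at hma
      rw [hb'] at hmb
      rw [← hFmul _ _ _ hma hmb]
      congr 1
      group
  · -- Part 2
    intro γ hγ act hact
    obtain ⟨hcoc, hinj, hone, hmul⟩ := hγ
    refine ⟨?_, ?_, ?_, ?_, ?_, ?_⟩
    · intro p
      rw [hact, hone, one_smul, one_mul]
    · intro g₂ g₁ p
      rw [hact, hact, hact]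
      simp only
      rw [mul_smul, ← hcoc p.1 g₁ g₂, mul_assoc]
    · intro g h p
      rw [hact, hact]
      simp [mul_assoc]
    · -- G-free
      intro g p hgp
      rw [hact] at hgp
      have h1 : g • p.1 = p.1 := congrArg Prod.fst hgp
      have h2 : γ p.1 g * p.2 = p.2 := congrArg Prod.snd hgp
      have h3 : γ p.1 g = 1 := by
        have h4 : γ p.1 g * p.2 = 1 * p.2 := by rw [h2, one_mul]
        exact mul_right_cancel h4
      have hg : g ∈ MulAction.stabilizer G p.1 := h1
      exact hinj p.1 hg (one_mem _) (by rw [h3, hone])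
    · -- H-free
      intro h p hp
      have h2 : p.2 * h = p.2 := congrArg Prod.snd hp
      have h4 : p.2 * h = p.2 * 1 := by rw [h2, mul_one]
      exact mul_left_cancel h4
    · -- transversal
      intro x Y hY p hp
      obtain ⟨g₀, hg₀⟩ := MulAction.mem_orbit_iff.mp hp
      obtain ⟨y, ⟨hyY, k, ⟨s, hs, hks⟩, hky⟩, huniq⟩ := hY ((γ x g₀)⁻¹ * p.2)
      have key : ∀ s : G, s ∈ MulAction.stabilizer G x →
          γ x (g₀ * s) = γ x g₀ * γ x s := by
        intro s hs
        have hsx : s • x = x := hs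
        have := hcoc x s g₀
        rw [hsx] at this
        rw [← this]
      refine ⟨(x, y), ⟨Set.mem_prod.mpr ⟨rfl, hyY⟩, g₀ * s, ?_⟩, ?_⟩
      · rw [hact]
        simp only
        have h1 : (g₀ * s) • x = p.1 := by
          rw [mul_smul, show s • x = x from hs, hg₀]
        have h2 : γ x (g₀ * s) * y = p.2 := by
          rw [key s hs, mul_assoc, hks, ← hky, ← mul_assoc, mul_inv_cancel, one_mul]
        rw [h1, h2]
      · rintro ⟨x₁, y₁⟩ ⟨hq₁, g', hg'⟩
        obtain ⟨hx₁, hy₁⟩ := Set.mem_prod.mp hq₁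
        simp only [Set.mem_singleton_iff] at hx₁
        rw [hact] at hg'
        rw [hx₁] at hg'
        simp only at hg'
        have h1 : g' • x = p.1 := congrArg Prod.fst hg'
        have h2 : γ x g' * y₁ = p.2 := congrArg Prod.snd hg'
        have hs' : (g₀⁻¹ * g') ∈ MulAction.stabilizer G x := by
          rw [MulAction.mem_stabilizer_iff, mul_smul, h1, ← hg₀, inv_smul_smul]
        have h3 : γ x g' = γ x g₀ * γ x (g₀⁻¹ * g') := by
          have h3' := key _ hs'
          rwa [show g₀ * (g₀⁻¹ * g') = g' by group] at h3'
        have h4 : (γ x g₀)⁻¹ * p.2 = γ x (g₀⁻¹ * g') * y₁ := by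
          rw [← h2, h3, ← mul_assoc, ← mul_assoc, inv_mul_cancel, one_mul]
        have h5 := huniq y₁ ⟨hy₁, γ x (g₀⁻¹ * g'), ⟨g₀⁻¹ * g', hs', rfl⟩, h4⟩
        exact Prod.ext hx₁ h5
end

section
/- Let G be a finitely generated group with finite symmetric generating set S acting (not necessarily freely) on a set X, and suppose there is an exhaustion X₁ ⊆ X₂ ⊆ ⋯ ⊆ X of X by finite subsets with ⋃_k X_k = X and |S·X_k \ X_k| / |X_k| → 0 as k → ∞. Let H be a group such that for every x ∈ X the stabilizer G_x embeds in H (admits an injective group homomorphism into H). Then G is a generalized amenable extension of H. -/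
set_option synthInstance.maxHeartbeats 1000000
set_option maxHeartbeats 1000000

open scoped Pointwise

noncomputable section

/-- The number of `H`-orbits of a (right-)`H`-invariant subset `Y`, i.e. `|Y/H|`. -/
def orbitCount (H : Type*) [Group H] {X : Type*} [MulAction Hᵐᵒᵖ X] (Y : Set X) : ℕ :=
  ((fun x => Quotient.mk (MulAction.orbitRel Hᵐᵒᵖ X) x) '' Y).ncard

/-- `G` (with finite symmetric generating set `S`) is a generalized amenable extension of
`H`: there is a set `X` with a free left `G`-action and a commuting free right `H`-action
(modelled as a left `Hᵐᵒᵖ`-action), and an exhaustion `X₁ ⊆ X₂ ⊆ ⋯` of `X` by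
`H`-invariant subsets with finitely many `H`-orbits such that
`|(S·X_k \ X_k)/H| / |X_k/H| → 0`. -/
def IsGeneralizedAmenableExtension (G : Type u) (H : Type v) [Group G] [Group H]
    (S : Finset G) : Prop :=
  ∃ (X : Type (max u v)) (iG : MulAction G X) (iH : MulAction Hᵐᵒᵖ X),
    letI := iG
    letI := iH
    (∀ (g : G) (h : Hᵐᵒᵖ) (x : X), g • h • x = h • g • x) ∧
    (∀ (g : G) (x : X), g • x = x → g = 1) ∧
    (∀ (h : Hᵐᵒᵖ) (x : X), h • x = x → h = 1) ∧
    ∃ Xk : ℕ → Set X,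
      (∀ (k : ℕ) (h : Hᵐᵒᵖ), ∀ x ∈ Xk k, h • x ∈ Xk k) ∧
      Monotone Xk ∧
      (⋃ k, Xk k) = Set.univ ∧
      (∀ k, ((fun x => Quotient.mk (MulAction.orbitRel Hᵐᵒᵖ X) x) '' Xk k).Finite) ∧
      Filter.Tendsto
        (fun k => (orbitCount H (((S : Set G) • Xk k) \ Xk k) : ℝ) / (orbitCount H (Xk k)))
        Filter.atTop (nhds 0)

/-! Choose a base point in every `G`-orbit of `X` and, for each `x`, an element `σ x` of `G`
carrying the base point `y` of its orbit to `x`. Then `σ (g • x)⁻¹ * g * σ x` fixes `y`, and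
applying the embedding `G_y ↪ H` to it gives a cocycle `c : G → X → H`. The skew product
action `g • (x, h) = (g • x, c g x * h)` on `X × H` commutes with right multiplication on `H`,
is free because the embeddings are injective, and has its right `H`-orbits in bijection with `X`
through the first coordinate. Hence the sets `X_k × H` form an exhaustion with exactly the
Følner ratios of the `X_k`. -/

namespace MulAction

variable {G X H : Type*} [Group G] [MulAction G X] [Group H]

section SkewProduct

def IsCocycle (c : G → X → H) : Prop :=
  ∀ (g' g : G) (x : X), c (g' * g) x = c g' (g • x) * c g x

variable {c : G → X → H}

theorem IsCocycle.map_one (hc : IsCocycle c) (x : X) : c 1 x = 1 := by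
  have h := hc 1 1 x
  rw [one_mul, one_smul] at h
  exact mul_eq_left.mp h.symm

variable (c) in
@[reducible] def skewProductAction (hc : IsCocycle c) : MulAction G (X × H) where
  smul g p := (g • p.1, c g p.1 * p.2)
  one_smul p := by
    change ((1 : G) • p.1, c 1 p.1 * p.2) = p
    rw [one_smul, hc.map_one, one_mul]
  mul_smul g' g p := by
    change ((g' * g) • p.1, c (g' * g) p.1 * p.2) =
      (g' • g • p.1, c g' (g • p.1) * (c g p.1 * p.2))
    rw [mul_smul, hc, mul_assoc]

theorem skewProductAction_smul_eq_self_iff (hc : IsCocycle c) {g : G} {p : X × H} :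
    letI := skewProductAction c hc
    g • p = p ↔ g • p.1 = p.1 ∧ c g p.1 = 1 := by
  change (g • p.1, c g p.1 * p.2) = p ↔ _
  rw [Prod.ext_iff, mul_eq_right]

theorem skewProductAction_smul_prod_univ (hc : IsCocycle c) (S : Set G) (A : Set X) :
    letI := skewProductAction c hc
    S • (A ×ˢ Set.univ : Set (X × H)) = (S • A) ×ˢ Set.univ := by
  ext ⟨y, h⟩
  constructor
  · rintro ⟨g, hg, p, hp, hgp⟩
    exact ⟨⟨g, hg, p.1, hp.1, congrArg Prod.fst hgp⟩, trivial⟩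
  · rintro ⟨⟨g, hg, x, hx, rfl⟩, -⟩
    refine ⟨g, hg, (x, (c g x)⁻¹ * h), ⟨hx, trivial⟩, ?_⟩
    change (g • x, c g x * ((c g x)⁻¹ * h)) = (g • x, h)
    rw [mul_inv_cancel_left]

end SkewProduct

section RightMul

variable (X H) in
@[reducible] def prodRightMulAction : MulAction Hᵐᵒᵖ (X × H) where
  smul a p := (p.1, p.2 * a.unop)
  one_smul p := by
    change (p.1, p.2 * 1) = p
    rw [mul_one]
  mul_smul a b p := by
    change (p.1, p.2 * (a * b).unop) = (p.1, p.2 * b.unop * a.unop)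
    rw [MulOpposite.unop_mul, mul_assoc]

attribute [local instance] prodRightMulAction

theorem prodRightMulAction_smul_eq_self_iff {a : Hᵐᵒᵖ} {p : X × H} : a • p = p ↔ a = 1 := by
  change (p.1, p.2 * a.unop) = p ↔ _
  rw [Prod.ext_iff, mul_eq_left, MulOpposite.unop_eq_one_iff]
  exact and_iff_right rfl

theorem skewProductAction_smul_comm {c : G → X → H} (hc : IsCocycle c) (g : G) (a : Hᵐᵒᵖ)
    (p : X × H) :
    letI := skewProductAction c hc
    g • a • p = a • g • p := by
  change (g • p.1, c g p.1 * (p.2 * a.unop)) = (g • p.1, c g p.1 * p.2 * a.unop)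
  rw [mul_assoc]

def orbitFst : orbitRel.Quotient Hᵐᵒᵖ (X × H) → X :=
  Quotient.lift Prod.fst fun _ _ ⟨_, h⟩ => (congrArg Prod.fst h).symm

theorem orbitFst_injective : Function.Injective (orbitFst (X := X) (H := H)) := by
  rintro ⟨p⟩ ⟨q⟩ (h : p.1 = q.1)
  refine Quotient.sound ⟨MulOpposite.op (q.2⁻¹ * p.2), ?_⟩
  change (q.1, q.2 * (q.2⁻¹ * p.2)) = p
  rw [mul_inv_cancel_left, ← h]

theorem orbitCount_prod_univ (A : Set X) : orbitCount H (A ×ˢ (Set.univ : Set H)) = A.ncard := by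
  rw [orbitCount, ← Set.ncard_image_of_injective _ orbitFst_injective, Set.image_image]
  exact congrArg Set.ncard (Set.fst_image_prod A Set.univ_nonempty)

theorem finite_orbits_prod_univ {A : Set X} (hA : A.Finite) :
    ((fun p => Quotient.mk (orbitRel Hᵐᵒᵖ (X × H)) p) '' (A ×ˢ (Set.univ : Set H))).Finite := by
  refine Set.Finite.of_finite_image ?_ orbitFst_injective.injOn
  rw [Set.image_image]
  exact (Set.fst_image_prod A (Set.univ_nonempty (α := H))).symm ▸ hA

end RightMul

section StabilizerCocycle

variable (G) in
def orbitRep (x : X) : X :=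
  (Quotient.mk (orbitRel G X) x).out

theorem orbitRep_smul (g : G) (x : X) : orbitRep G (g • x) = orbitRep G x :=
  congrArg Quotient.out (Quotient.sound ⟨g, rfl⟩)

theorem exists_smul_orbitRep_eq (x : X) : ∃ g : G, g • orbitRep G x = x :=
  mem_orbit_iff.mp <| orbitRel_apply.mp <| (orbitRel G X).iseqv.symm <| Quotient.exact <|
    Quotient.out_eq _

variable (G)

def orbitSection (x : X) : G :=
  (exists_smul_orbitRep_eq x).choose

theorem orbitSection_smul_orbitRep (x : X) : orbitSection G x • orbitRep G x = x :=
  (exists_smul_orbitRep_eq x).choose_spec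

def orbitCocycle (g : G) (x : X) : G :=
  (orbitSection G (g • x))⁻¹ * g * orbitSection G x

variable {G}

theorem orbitCocycle_mem_stabilizer (g : G) (x : X) :
    orbitCocycle G g x ∈ stabilizer G (orbitRep G x) := by
  rw [mem_stabilizer_iff, orbitCocycle, mul_smul, mul_smul, orbitSection_smul_orbitRep,
    inv_smul_eq_iff, ← orbitRep_smul g x, orbitSection_smul_orbitRep]

theorem orbitCocycle_mul (g' g : G) (x : X) :
    orbitCocycle G (g' * g) x = orbitCocycle G g' (g • x) * orbitCocycle G g x := by
  simp only [orbitCocycle, mul_smul]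
  group

theorem orbitCocycle_of_smul_eq {g : G} {x : X} (h : g • x = x) :
    orbitCocycle G g x = (orbitSection G x)⁻¹ * g * orbitSection G x := by
  rw [orbitCocycle, h]

variable (φ : ∀ y : X, stabilizer G y →* H)

def stabilizerCocycle (g : G) (x : X) : H :=
  φ (orbitRep G x) ⟨orbitCocycle G g x, orbitCocycle_mem_stabilizer g x⟩

theorem isCocycle_stabilizerCocycle : IsCocycle (stabilizerCocycle φ) := by
  intro g' g x
  -- `orbitRep G (g • x)` and `orbitRep G x` are equal but not definitionally so.
  have transport : ∀ {y y' : X} (_ : y = y') (a : G) (ha : a ∈ stabilizer G y)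
      (ha' : a ∈ stabilizer G y'), φ y ⟨a, ha⟩ = φ y' ⟨a, ha'⟩ := by
    rintro y _ rfl a ha ha'
    rfl
  rw [stabilizerCocycle, stabilizerCocycle, stabilizerCocycle,
    transport (orbitRep_smul g x) (orbitCocycle G g' (g • x)) _
      (orbitRep_smul g x ▸ orbitCocycle_mem_stabilizer g' (g • x)), ← map_mul]
  congr 1
  exact Subtype.ext (orbitCocycle_mul g' g x)

theorem eq_one_of_stabilizerCocycle_eq_one (hφ : ∀ y, Function.Injective (φ y)) {g : G} {x : X}
    (hgx : g • x = x) (h : stabilizerCocycle φ g x = 1) : g = 1 := by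
  have hconj : orbitCocycle G g x = 1 :=
    congrArg Subtype.val (hφ _ (h.trans (map_one _).symm))
  rwa [orbitCocycle_of_smul_eq hgx, mul_assoc, inv_mul_eq_one, eq_comm, mul_eq_right] at hconj

end StabilizerCocycle

end MulAction

open MulAction

theorem generalized_amenable_extension_of_amenable_action_general
    (G H X : Type u) [Group G] [Group H]
    (S : Finset G)
    [MulAction G X]
    (Xk : ℕ → Set X) (hfin : ∀ k, (Xk k).Finite)
    (hmono : Monotone Xk) (hexh : (⋃ k, Xk k) = Set.univ)
    (hfolner : Filter.Tendsto
      (fun k => ((((S : Set G) • Xk k) \ Xk k).ncard : ℝ) / (Xk k).ncard)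
      Filter.atTop (nhds 0))
    (hstab : ∀ x : X, ∃ φ : MulAction.stabilizer G x →* H, Function.Injective φ) :
    IsGeneralizedAmenableExtension G H S := by
  choose φ hφ using hstab
  have hc := isCocycle_stabilizerCocycle φ
  have hdiff (A B : Set X) :
      (B ×ˢ Set.univ : Set (X × H)) \ A ×ˢ Set.univ = (B \ A) ×ˢ Set.univ := by
    simp [Set.prod_sdiff_prod]
  refine ⟨X × H, skewProductAction _ hc, prodRightMulAction X H, skewProductAction_smul_comm hc,
    fun g p hp => ?_, fun a p => prodRightMulAction_smul_eq_self_iff.mp,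
    fun k => Xk k ×ˢ Set.univ, fun k a p hp => ⟨hp.1, trivial⟩,
    fun k l hkl => Set.prod_mono (hmono hkl) le_rfl,
    by rw [← Set.iUnion_prod_const, hexh, Set.univ_prod_univ],
    fun k => finite_orbits_prod_univ (hfin k), ?_⟩
  · obtain ⟨hgx, hcg⟩ := (skewProductAction_smul_eq_self_iff hc).mp hp
    exact eq_one_of_stabilizerCocycle_eq_one φ hφ hgx hcg
  · simpa only [skewProductAction_smul_prod_univ, hdiff, orbitCount_prod_univ] using hfolner

/-- If the finitely generated group `G` (with finite symmetric
generating set `S`) acts on a set `X` admitting a Følner exhaustion by finite subsets, and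
every point stabilizer `G_x` embeds into the group `H`, then `G` is a generalized amenable
extension of `H`. -/
theorem generalized_amenable_extension_of_amenable_action
    (G H X : Type u) [Group G] [Group H]
    (S : Finset G) (hsymm : ∀ s ∈ S, s⁻¹ ∈ S)
    (hgen : Subgroup.closure (S : Set G) = ⊤)
    [MulAction G X]
    (Xk : ℕ → Set X) (hfin : ∀ k, (Xk k).Finite)
    (hmono : Monotone Xk) (hexh : (⋃ k, Xk k) = Set.univ)
    (hfolner : Filter.Tendsto
      (fun k => ((((S : Set G) • Xk k) \ Xk k).ncard : ℝ) / (Xk k).ncard)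
      Filter.atTop (nhds 0))
    (hstab : ∀ x : X, ∃ φ : MulAction.stabilizer G x →* H, Function.Injective φ) :
    IsGeneralizedAmenableExtension G H S :=
  generalized_amenable_extension_of_amenable_action_general G H X S Xk hfin hmono hexh hfolner hstab

end
end

section
/- Let K ≥ 1, d ≥ 0 and C ∈ ℝ, and let μ be a finite Borel measure on the interval [0, K] with total mass μ([0,K]) ≤ d, such that ∫_{(0,K]} ln(t) dμ(t) ≥ −C (in particular this integral is not −∞). Then for every λ with 0 < λ < K, μ((0, λ]) ≤ (C + d·ln K) / (−ln(λ/K)). -/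
open MeasureTheory

/-! Split `(0, K]` at `λ`: since `log ≤ log λ` on `(0, λ]` and `log ≤ log K` on `(λ, K]`,
`∫_{(0,K]} log ≤ μ(0,K] · log K − μ(0,λ] · log (K/λ)`. With `μ(0,K] ≤ d`, `log K ≥ 0` and
the lower bound `−C` on the integral, this is a Chebyshev-type bound for `μ(0,λ]`. -/

theorem setIntegral_le_of_le_const_real {X : Type*} [MeasurableSpace X] {μ : Measure X}
    {f : X → ℝ} {s : Set X} {c : ℝ} (hs : MeasurableSet s) (hμs : μ s ≠ ⊤)
    (hf : ∀ x ∈ s, f x ≤ c) (hfint : IntegrableOn f s μ) :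
    ∫ x in s, f x ∂μ ≤ μ.real s * c := by
  rw [← smul_eq_mul, ← setIntegral_const c]
  exact setIntegral_mono_on hfint (integrableOn_const hμs) hs hf

theorem measureReal_Ioc_mul_log_div_le (μ : Measure ℝ) [IsFiniteMeasure μ] {lam K : ℝ}
    (hlam : 0 < lam) (hlamK : lam ≤ K) (hint : IntegrableOn Real.log (Set.Ioc 0 K) μ) :
    μ.real (Set.Ioc 0 lam) * Real.log (K / lam) ≤
      μ.real (Set.Ioc 0 K) * Real.log K - ∫ t in Set.Ioc 0 K, Real.log t ∂μ := by
  have hdisj : Disjoint (Set.Ioc 0 lam) (Set.Ioc lam K) := Set.Ioc_disjoint_Ioc_of_le le_rfl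
  have hunion : Set.Ioc 0 lam ∪ Set.Ioc lam K = Set.Ioc 0 K :=
    Set.Ioc_union_Ioc_eq_Ioc hlam.le hlamK
  have hint_low : IntegrableOn Real.log (Set.Ioc 0 lam) μ :=
    hint.mono_set (Set.Ioc_subset_Ioc le_rfl hlamK)
  have hint_high : IntegrableOn Real.log (Set.Ioc lam K) μ :=
    hint.mono_set (Set.Ioc_subset_Ioc hlam.le le_rfl)
  have hlow : ∫ t in Set.Ioc 0 lam, Real.log t ∂μ ≤ μ.real (Set.Ioc 0 lam) * Real.log lam :=
    setIntegral_le_of_le_const_real measurableSet_Ioc (measure_ne_top μ _)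
      (fun t ht => Real.log_le_log ht.1 ht.2) hint_low
  have hhigh : ∫ t in Set.Ioc lam K, Real.log t ∂μ ≤ μ.real (Set.Ioc lam K) * Real.log K :=
    setIntegral_le_of_le_const_real measurableSet_Ioc (measure_ne_top μ _)
      (fun t ht => Real.log_le_log (hlam.trans ht.1) ht.2) hint_high
  rw [← hunion, setIntegral_union hdisj measurableSet_Ioc hint_low hint_high,
    measureReal_union hdisj measurableSet_Ioc, Real.log_div (hlam.trans_le hlamK).ne' hlam.ne']
  linarith

theorem spectral_density_estimate_of_det_bound_general
    (K d C : ℝ) (hK : 1 ≤ K) (hd : 0 ≤ d)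
    (μ : Measure ℝ) [IsFiniteMeasure μ]
    (hmass : μ Set.univ ≤ ENNReal.ofReal d)
    (hint : IntegrableOn Real.log (Set.Ioc 0 K) μ)
    (hdet : -C ≤ ∫ t in Set.Ioc 0 K, Real.log t ∂μ)
    (lam : ℝ) (hlam0 : 0 < lam) (hlamK : lam < K) :
    (μ (Set.Ioc 0 lam)).toReal ≤ (C + d * Real.log K) / (-Real.log (lam / K)) := by
  have hmass_Ioc : μ.real (Set.Ioc 0 K) ≤ d :=
    ENNReal.toReal_le_of_le_ofReal hd ((measure_mono (Set.subset_univ _)).trans hmass)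
  have hchebyshev := measureReal_Ioc_mul_log_div_le μ hlam0 hlamK.le hint
  have hlogK : 0 ≤ Real.log K := Real.log_nonneg hK
  have hgap : 0 < Real.log (K / lam) := Real.log_pos ((one_lt_div hlam0).mpr hlamK)
  rw [← measureReal_def, ← Real.log_inv, inv_div, le_div_iff₀ hgap]
  linarith [mul_le_mul_of_nonneg_right hmass_Ioc hlogK]

/-- Let `μ` be a finite Borel measure on `[0, K]` (with `K ≥ 1`) of total
mass at most `d`, whose logarithmic moment satisfies `∫_{(0,K]} ln t dμ(t) ≥ −C`.  Then for
every `0 < λ < K` one has `μ((0, λ]) ≤ (C + d ln K) / (− ln(λ/K))`. -/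
theorem spectral_density_estimate_of_det_bound
    (K d C : ℝ) (hK : 1 ≤ K) (hd : 0 ≤ d)
    (μ : Measure ℝ) [IsFiniteMeasure μ]
    (hsupp : μ (Set.Icc 0 K)ᶜ = 0)
    (hmass : μ Set.univ ≤ ENNReal.ofReal d)
    (hint : IntegrableOn Real.log (Set.Ioc 0 K) μ)
    (hdet : -C ≤ ∫ t in Set.Ioc 0 K, Real.log t ∂μ)
    (lam : ℝ) (hlam0 : 0 < lam) (hlamK : lam < K) :
    (μ (Set.Ioc 0 lam)).toReal ≤ (C + d * Real.log K) / (-Real.log (lam / K)) :=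
  spectral_density_estimate_of_det_bound_general K d C hK hd μ hmass hint hdet lam hlam0 hlamK
end

section
/- Let K ≥ 0 and d ≥ 0, and let μ and μ_n (n ∈ ℕ) be finite Borel measures on the interval [0, K] with μ([0,K]) = μ_n([0,K]) = d for all n, such that the moments converge: ∫ t^m dμ_n(t) → ∫ t^m dμ(t) as n → ∞, for every m ∈ ℕ. Then for every λ ∈ [0, K]: limsup_n μ_n([0,λ]) ≤ μ([0,λ]), and moreover μ([0,λ]) = lim_{ε→0⁺} liminf_n μ_n([0, λ+ε]) = lim_{ε→0⁺} limsup_n μ_n([0, λ+ε]). -/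
/-!
Since the moments converge, Weierstrass approximation on `[0, K]` makes `∫ f dμₙ → ∫ f dμ` for
every continuous `f`, i.e. `μₙ → μ` weakly. The portmanteau theorem bounds `limsup μₙ` of the
closed set `(-∞, λ]` by its `μ`-measure and, the total masses being equal, `liminf μₙ` of the open
set `(-∞, λ + ε)` from below by its `μ`-measure. As all measures live on `[0, ∞)`, `[0, x]` may be
replaced by `(-∞, x]`, and right-continuity of `x ↦ μ (-∞, x]` squeezes the liminf and the limsup
of `μₙ [0, λ + ε]` to `μ [0, λ]` as `ε → 0⁺`.
-/

open MeasureTheory Filter Set Topology Polynomial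
open scoped ENNReal

section Moments

variable {a b : ℝ} {ν : Measure ℝ}

lemma Continuous.integrable_of_ae_mem_Icc [IsFiniteMeasureOnCompacts ν] {f : ℝ → ℝ}
    (hf : Continuous f) (hν : ∀ᵐ t ∂ν, t ∈ Icc a b) : Integrable f ν := by
  rw [← Measure.restrict_eq_self_of_ae_mem hν]
  exact hf.integrableOn_Icc

lemma abs_integral_sub_le_of_ae_mem_Icc [IsFiniteMeasure ν] (hν : ∀ᵐ t ∂ν, t ∈ Icc a b)
    {f g : ℝ → ℝ} (hf : Continuous f) (hg : Continuous g) {δ : ℝ} (hfg : ∀ t ∈ Icc a b, |f t - g t| ≤ δ) :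
    |∫ t, f t ∂ν - ∫ t, g t ∂ν| ≤ δ * ν.real univ := by
  rw [← integral_sub (hf.integrable_of_ae_mem_Icc hν) (hg.integrable_of_ae_mem_Icc hν),
    ← Real.norm_eq_abs]
  exact norm_integral_le_of_norm_le_const (hν.mono fun t ht => hfg t ht)

lemma integral_eval_eq_sum_moments [IsFiniteMeasure ν] (hν : ∀ᵐ t ∂ν, t ∈ Icc a b) (p : ℝ[X]) :
    ∫ t, p.eval t ∂ν = ∑ i ∈ Finset.range (p.natDegree + 1), p.coeff i * ∫ t, t ^ i ∂ν := by
  simp_rw [eval_eq_sum_range, ← integral_const_mul]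
  exact integral_finsetSum _ fun i _ =>
    ((continuous_pow i).integrable_of_ae_mem_Icc hν).const_mul _

variable {ι : Type*} {L : Filter ι} {μ : Measure ℝ} {μs : ι → Measure ℝ} [IsFiniteMeasure μ]
  [∀ i, IsFiniteMeasure (μs i)]

/-- Weierstrass approximation reduces to polynomials; the uniform error is controlled by the
total masses, which converge since they are the zeroth moments. -/
theorem tendsto_integral_of_tendsto_moments (hμ : ∀ᵐ t ∂μ, t ∈ Icc a b)
    (hμs : ∀ i, ∀ᵐ t ∂μs i, t ∈ Icc a b)
    (hmom : ∀ m : ℕ, Tendsto (fun i => ∫ t, t ^ m ∂μs i) L (𝓝 (∫ t, t ^ m ∂μ)))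
    {f : ℝ → ℝ} (hf : Continuous f) :
    Tendsto (fun i => ∫ t, f t ∂μs i) L (𝓝 (∫ t, f t ∂μ)) := by
  have hpoly (p : ℝ[X]) : Tendsto (fun i => ∫ t, p.eval t ∂μs i) L (𝓝 (∫ t, p.eval t ∂μ)) := by
    simp only [integral_eval_eq_sum_moments hμ, integral_eval_eq_sum_moments (hμs _)]
    exact tendsto_finsetSum _ fun i _ => (hmom i).const_mul _
  have hmass : Tendsto (fun i => (μs i).real univ) L (𝓝 (μ.real univ)) := by
    simpa using hmom 0
  rw [Metric.tendsto_nhds]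
  intro ε hε
  set M := μ.real univ + 1
  have hM : 0 < M := by positivity
  obtain ⟨p, hp⟩ := exists_polynomial_near_of_continuousOn a b f hf.continuousOn
    (ε / (3 * M)) (by positivity)
  have hfp : ∀ t ∈ Icc a b, |f t - p.eval t| ≤ ε / (3 * M) := fun t ht => by
    rw [abs_sub_comm]; exact (hp t ht).le
  have hδM : ε / (3 * M) * M = ε / 3 := by field_simp
  filter_upwards [Metric.tendsto_nhds.1 (hpoly p) (ε / 3) (by positivity),
    hmass.eventually (gt_mem_nhds (lt_add_one _))] with i hi hmi
  have hμs_err : |∫ t, f t ∂μs i - ∫ t, p.eval t ∂μs i| ≤ ε / 3 :=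
    (abs_integral_sub_le_of_ae_mem_Icc (hμs i) hf p.continuous hfp).trans
      (hδM ▸ mul_le_mul_of_nonneg_left hmi.le (by positivity))
  have hμ_err : |∫ t, p.eval t ∂μ - ∫ t, f t ∂μ| ≤ ε / 3 := by
    rw [abs_sub_comm]
    exact (abs_integral_sub_le_of_ae_mem_Icc hμ hf p.continuous hfp).trans
      (hδM ▸ mul_le_mul_of_nonneg_left (lt_add_one _).le (by positivity))
  rw [Real.dist_eq] at hi ⊢
  linarith [abs_sub_le (∫ t, f t ∂μs i) (∫ t, p.eval t ∂μs i) (∫ t, f t ∂μ),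
    abs_sub_le (∫ t, p.eval t ∂μs i) (∫ t, p.eval t ∂μ) (∫ t, f t ∂μ)]

end Moments

theorem limsup_measure_closed_le_of_tendsto_moments {a b : ℝ} {ι : Type*} {L : Filter ι}
    {μ : Measure ℝ} {μs : ι → Measure ℝ} [IsFiniteMeasure μ] [∀ i, IsFiniteMeasure (μs i)]
    (hμ : ∀ᵐ t ∂μ, t ∈ Icc a b) (hμs : ∀ i, ∀ᵐ t ∂μs i, t ∈ Icc a b)
    (hmom : ∀ m : ℕ, Tendsto (fun i => ∫ t, t ^ m ∂μs i) L (𝓝 (∫ t, t ^ m ∂μ)))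
    {F : Set ℝ} (hF : IsClosed F) :
    limsup (fun i => μs i F) L ≤ μ F :=
  FiniteMeasure.limsup_measure_closed_le_of_tendsto (μ := ⟨μ, inferInstance⟩)
    (μs := fun i => ⟨μs i, inferInstance⟩)
    (FiniteMeasure.tendsto_of_forall_integral_tendsto fun f =>
      tendsto_integral_of_tendsto_moments hμ hμs hmom f.continuous) hF

theorem le_liminf_measure_open_of_forall_limsup_measure_closed_le {Ω ι : Type*}
    [MeasurableSpace Ω] [TopologicalSpace Ω] [OpensMeasurableSpace Ω] {L : Filter ι}
    {μ : Measure Ω} {μs : ι → Measure Ω} [IsFiniteMeasure μ] [∀ i, IsFiniteMeasure (μs i)]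
    (hmass : ∀ i, μs i univ = μ univ)
    (h : ∀ F, IsClosed F → limsup (fun i => μs i F) L ≤ μ F) {G : Set Ω} (hG : IsOpen G) :
    μ G ≤ liminf (fun i => μs i G) L := by
  rcases L.eq_or_neBot with rfl | _
  · simp
  have hcompl (ν : Measure Ω) [IsFiniteMeasure ν] : ν G = ν univ - ν Gᶜ := by
    rw [← measure_compl hG.measurableSet.compl (measure_ne_top ν _), compl_compl]
  simp only [hcompl, hmass]
  rw [ENNReal.liminf_const_sub _ _ (measure_ne_top μ univ)]
  exact tsub_le_tsub_left (h _ hG.isClosed_compl) _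

lemma measure_Icc_eq_measure_Iic {ν : Measure ℝ} {a b : ℝ} (hν : ν (Ici a)ᶜ = 0) :
    ν (Icc a b) = ν (Iic b) := by
  rw [← Iic_inter_Ici, measure_inter_conull hν]

lemma tendsto_measure_Iic_add_nhdsGT (ν : Measure ℝ) [IsFiniteMeasure ν] (x : ℝ) :
    Tendsto (fun ε => ν (Iic (x + ε))) (𝓝[>] 0) (𝓝 (ν (Iic x))) := by
  have hinter : ⋂ ε > (0 : ℝ), Iic (x + ε) = Iic x := by
    ext t
    simp only [mem_iInter, mem_Iic]
    refine ⟨fun h => le_of_forall_gt_imp_ge_of_dense fun y hy => ?_,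
      fun h ε hε => by linarith⟩
    simpa using h (y - x) (sub_pos.2 hy)
  rw [← hinter]
  exact tendsto_measure_biInter_gt (fun _ _ => measurableSet_Iic.nullMeasurableSet)
    (fun _ _ _ hij => Iic_subset_Iic.2 (by linarith)) ⟨1, one_pos, measure_ne_top ν _⟩

lemma measure_Iic_le_liminf_measure_Iic {ι : Type*} {L : Filter ι} {μ : Measure ℝ}
    {μs : ι → Measure ℝ} [IsFiniteMeasure μ] [∀ i, IsFiniteMeasure (μs i)]
    (hmass : ∀ i, μs i univ = μ univ)
    (h : ∀ F, IsClosed F → limsup (fun i => μs i F) L ≤ μ F) {x y : ℝ} (hxy : x < y) :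
    μ (Iic x) ≤ liminf (fun i => μs i (Iic y)) L :=
  calc μ (Iic x) ≤ μ (Iio y) := measure_mono (Iic_subset_Iio.2 hxy)
    _ ≤ liminf (fun i => μs i (Iio y)) L :=
      le_liminf_measure_open_of_forall_limsup_measure_closed_le hmass h isOpen_Iio
    _ ≤ liminf (fun i => μs i (Iic y)) L :=
      liminf_le_liminf (Eventually.of_forall fun _ => measure_mono Iio_subset_Iic_self)

section BoundedToReal

variable {ι : Type*} {L : Filter ι} {u : ι → ℝ≥0∞} {C : ℝ≥0∞}

lemma ENNReal.limsup_toReal_le_toReal [L.NeBot] (hC : C ≠ ∞) (hu : ∀ i, u i ≤ C) {a : ℝ≥0∞}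
    (ha : a ≠ ∞) (h : limsup u L ≤ a) : limsup (fun i => (u i).toReal) L ≤ a.toReal := by
  rw [ENNReal.limsup_toReal_eq hC (.of_forall hu)]
  exact ENNReal.toReal_mono ha h

lemma ENNReal.toReal_le_liminf_toReal [L.NeBot] (hC : C ≠ ∞) (hu : ∀ i, u i ≤ C) {a : ℝ≥0∞}
    (h : a ≤ liminf u L) : a.toReal ≤ liminf (fun i => (u i).toReal) L := by
  rw [ENNReal.liminf_toReal_eq hC (.of_forall hu)]
  exact ENNReal.toReal_mono
    (ne_top_of_le_ne_top hC (liminf_le_of_frequently_le' (.of_forall hu))) h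

lemma ENNReal.liminf_toReal_le_limsup_toReal [L.NeBot] (hC : C ≠ ∞) (hu : ∀ i, u i ≤ C) :
    liminf (fun i => (u i).toReal) L ≤ limsup (fun i => (u i).toReal) L :=
  liminf_le_limsup (isBoundedUnder_of ⟨_, fun i => ENNReal.toReal_mono hC (hu i)⟩)
    (isBoundedUnder_of ⟨0, fun _ => ENNReal.toReal_nonneg⟩)

end BoundedToReal

theorem spectral_density_approximation_general
    (K d : ℝ)
    (μ : Measure ℝ) (μn : ℕ → Measure ℝ)
    [IsFiniteMeasure μ] [∀ n, IsFiniteMeasure (μn n)]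
    (hsupp : μ (Set.Icc 0 K)ᶜ = 0) (hsuppn : ∀ n, μn n (Set.Icc 0 K)ᶜ = 0)
    (hmass : μ Set.univ = ENNReal.ofReal d)
    (hmassn : ∀ n, μn n Set.univ = ENNReal.ofReal d)
    (hmom : ∀ m : ℕ, Tendsto (fun n => ∫ t, t ^ m ∂(μn n)) atTop (nhds (∫ t, t ^ m ∂μ)))
    (lam : ℝ) :
    limsup (fun n => (μn n (Set.Icc 0 lam)).toReal) atTop ≤ (μ (Set.Icc 0 lam)).toReal ∧
    Tendsto (fun ε => liminf (fun n => (μn n (Set.Icc 0 (lam + ε))).toReal) atTop)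
      (nhdsWithin 0 (Set.Ioi 0)) (nhds ((μ (Set.Icc 0 lam)).toReal)) ∧
    Tendsto (fun ε => limsup (fun n => (μn n (Set.Icc 0 (lam + ε))).toReal) atTop)
      (nhdsWithin 0 (Set.Ioi 0)) (nhds ((μ (Set.Icc 0 lam)).toReal)) := by
  have hIcc (ν : Measure ℝ) (hν : ν (Icc 0 K)ᶜ = 0) (x : ℝ) : ν (Icc 0 x) = ν (Iic x) :=
    measure_Icc_eq_measure_Iic (measure_mono_null (compl_subset_compl.2 Icc_subset_Ici_self) hν)
  simp only [hIcc μ hsupp, hIcc _ (hsuppn _)]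
  have hclosed (F : Set ℝ) (hF : IsClosed F) : limsup (fun n => μn n F) atTop ≤ μ F :=
    limsup_measure_closed_le_of_tendsto_moments (mem_ae_iff.2 hsupp)
      (fun n => mem_ae_iff.2 (hsuppn n)) hmom hF
  have hbdd (s : Set ℝ) (n : ℕ) : μn n s ≤ ENNReal.ofReal d :=
    (measure_mono (subset_univ s)).trans (hmassn n).le
  have hlimsup (x : ℝ) : limsup (fun n => (μn n (Iic x)).toReal) atTop ≤ (μ (Iic x)).toReal :=
    ENNReal.limsup_toReal_le_toReal ENNReal.ofReal_ne_top (hbdd _) (measure_ne_top _ _)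
      (hclosed _ isClosed_Iic)
  have hliminf (ε : ℝ) (hε : 0 < ε) :
      (μ (Iic lam)).toReal ≤ liminf (fun n => (μn n (Iic (lam + ε))).toReal) atTop :=
    ENNReal.toReal_le_liminf_toReal ENNReal.ofReal_ne_top (hbdd _)
      (measure_Iic_le_liminf_measure_Iic (fun n => (hmassn n).trans hmass.symm) hclosed
        (lt_add_of_pos_right lam hε))
  have hle (x : ℝ) :=
    ENNReal.liminf_toReal_le_limsup_toReal (L := atTop) ENNReal.ofReal_ne_top (hbdd (Iic x))
  have hright := (ENNReal.tendsto_toReal (measure_ne_top μ _)).comp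
    (tendsto_measure_Iic_add_nhdsGT μ lam)
  refine ⟨hlimsup lam, ?_, ?_⟩ <;>
    refine tendsto_of_tendsto_of_tendsto_of_le_of_le' tendsto_const_nhds hright ?_ ?_ <;>
    filter_upwards [self_mem_nhdsWithin] with ε (hε : 0 < ε)
  · exact hliminf ε hε
  · exact (hle _).trans (hlimsup _)
  · exact (hliminf ε hε).trans (hle _)
  · exact hlimsup _

/-- Let `μ, μ_n` be finite Borel measures on `[0, K]`, all of total mass
`d`, whose moments converge: `∫ t^m dμ_n → ∫ t^m dμ` for all `m`.  Then for every
`λ ∈ [0, K]`, `limsup_n μ_n([0,λ]) ≤ μ([0,λ])`, and `μ([0,λ])` is the limit as `ε → 0⁺` of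
both `liminf_n μ_n([0,λ+ε])` and `limsup_n μ_n([0,λ+ε])`. -/
theorem spectral_density_approximation
    (K d : ℝ) (hK : 0 ≤ K) (hd : 0 ≤ d)
    (μ : Measure ℝ) (μn : ℕ → Measure ℝ)
    [IsFiniteMeasure μ] [∀ n, IsFiniteMeasure (μn n)]
    (hsupp : μ (Set.Icc 0 K)ᶜ = 0) (hsuppn : ∀ n, μn n (Set.Icc 0 K)ᶜ = 0)
    (hmass : μ Set.univ = ENNReal.ofReal d)
    (hmassn : ∀ n, μn n Set.univ = ENNReal.ofReal d)
    (hmom : ∀ m : ℕ, Tendsto (fun n => ∫ t, t ^ m ∂(μn n)) atTop (nhds (∫ t, t ^ m ∂μ)))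
    (lam : ℝ) (hlam : lam ∈ Set.Icc 0 K) :
    limsup (fun n => (μn n (Set.Icc 0 lam)).toReal) atTop ≤ (μ (Set.Icc 0 lam)).toReal ∧
    Tendsto (fun ε => liminf (fun n => (μn n (Set.Icc 0 (lam + ε))).toReal) atTop)
      (nhdsWithin 0 (Set.Ioi 0)) (nhds ((μ (Set.Icc 0 lam)).toReal)) ∧
    Tendsto (fun ε => limsup (fun n => (μn n (Set.Icc 0 (lam + ε))).toReal) atTop)
      (nhdsWithin 0 (Set.Ioi 0)) (nhds ((μ (Set.Icc 0 lam)).toReal)) :=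
  spectral_density_approximation_general K d μ μn hsupp hsuppn hmass hmassn hmom lam
end
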